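/- Let p(z) = ∏_{k=1}^n p_k(z_k | pa_k(z)) be a positive density on ℝ^n factorizing according to a DAG G. Suppose node i is a sink of G with heteroscedastic Gaussian conditional: log p_i(z_i | pa_i(z)) = -(1/2)((z_i - f_i(pa_i(z)))/σ_i(pa_i(z)))² - log σ_i(pa_i(z)) - (1/2)log(2π), where f_i and σ_i > 0 are smooth functions of the parents of i only. Then ∂² log p(z) / ∂z_i² = -1/σ_i(pa_i(z))², and consequently for every j that is not a parent of i, ∂³ log p(z) / ∂z_i² ∂z_j = 0. -/

import Mathlib

/-- Partial derivative of a scalar function on `ℝ^n` in the `i`-th coordinate direction. -/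
noncomputable def pd {n : ℕ} (i : Fin n) (f : (Fin n → ℝ) → ℝ) : (Fin n → ℝ) → ℝ :=
  fun z => fderiv ℝ f z (Pi.single i 1)

/-!
Since `i` is a sink, `z_i` enters `log p = ∑ₖ log pₖ` only through the factor `pᵢ`, and since `f`
and `σ` depend on the parents of `i` alone, along the line `t ↦ z[i ↦ t]` this factor is the
quadratic `-(1/2) ((t - f) / σ)² + const`. Hence `∂ᵢ² log p = -1/σ²`, a function of the parents of
`i` only, so its derivative in any other direction `j` vanishes.
-/

section PartialDerivative

variable {n : ℕ} {i : Fin n} {g : (Fin n → ℝ) → ℝ} {z : Fin n → ℝ}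

theorem hasDerivAt_pd (hg : DifferentiableAt ℝ g z) :
    HasDerivAt (fun t => g (Function.update z i t)) (pd i g z) (z i) := by
  have hg' : HasFDerivAt g (fderiv ℝ g z) (Function.update z i (z i)) := by
    rw [Function.update_eq_self]; exact hg.hasFDerivAt
  exact hg'.comp_hasDerivAt (z i) (hasDerivAt_update z i (z i))

theorem pd_eq_of_hasDerivAt {φ : ℝ → ℝ} {c : ℝ} (hg : DifferentiableAt ℝ g z)
    (hφ : ∀ t, g (Function.update z i t) = φ t) (h : HasDerivAt φ c (z i)) :
    pd i g z = c :=
  (hasDerivAt_pd hg).unique (by simpa only [hφ] using h)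

theorem pd_eq_zero_of_update_eq (hg : DifferentiableAt ℝ g z)
    (h : ∀ t, g (Function.update z i t) = g z) :
    pd i g z = 0 :=
  pd_eq_of_hasDerivAt hg h (hasDerivAt_const _ _)

theorem ContDiff.pd {k m : WithTop ℕ∞} (hg : ContDiff ℝ k g) (hmk : m + 1 ≤ k) (i : Fin n) :
    ContDiff ℝ m (pd i g) :=
  (hg.fderiv_right hmk).clm_apply contDiff_const

theorem pd_sum {ι : Type*} (s : Finset ι) {L : ι → (Fin n → ℝ) → ℝ}
    (hL : ∀ k, Differentiable ℝ (L k)) :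
    pd i (fun w => ∑ k ∈ s, L k w) = fun w => ∑ k ∈ s, pd i (L k) w := by
  funext w
  simp only [pd, fderiv_fun_sum (fun k _ => (hL k).differentiableAt), sum_apply]

end PartialDerivative

section GaussianConditional

variable {n : ℕ} {i : Fin n} {g a s b : (Fin n → ℝ) → ℝ}

theorem pd_eq_of_gaussian (hg : Differentiable ℝ g)
    (hgauss : ∀ w, g w = -(1 / 2) * ((w i - a w) / s w) ^ 2 + b w)
    (ha : ∀ w t, a (Function.update w i t) = a w) (hs : ∀ w t, s (Function.update w i t) = s w)
    (hb : ∀ w t, b (Function.update w i t) = b w) :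
    pd i g = fun w => (a w - w i) / s w ^ 2 := by
  funext w
  have hφ := ((((hasDerivAt_id' (w i)).sub_const (a w)).div_const (s w)).fun_pow 2).const_mul
    (-(1 / 2 : ℝ)) |>.add_const (b w)
  refine pd_eq_of_hasDerivAt (hg w) (fun t => ?_) (hφ.congr_deriv (by ring))
  rw [hgauss, ha, hs, hb, Function.update_self]

theorem pd_pd_eq_of_gaussian (hg : ContDiff ℝ 2 g)
    (hgauss : ∀ w, g w = -(1 / 2) * ((w i - a w) / s w) ^ 2 + b w)
    (ha : ∀ w t, a (Function.update w i t) = a w) (hs : ∀ w t, s (Function.update w i t) = s w)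
    (hb : ∀ w t, b (Function.update w i t) = b w) :
    pd i (pd i g) = fun w => -1 / s w ^ 2 := by
  have hpd := pd_eq_of_gaussian (hg.differentiable (by norm_num)) hgauss ha hs hb
  funext w
  have hφ := ((hasDerivAt_id' (w i)).const_sub (a w)).div_const (s w ^ 2)
  refine pd_eq_of_hasDerivAt ((hg.pd (m := 1) (by norm_num) i).differentiable one_ne_zero w)
    (fun t => ?_) (hφ.congr_deriv (by ring))
  simp only [hpd, ha, hs, Function.update_self]

end GaussianConditional

section SinkNode

variable {n : ℕ} {E : Fin n → Fin n → Prop} {i j : Fin n}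

theorem update_eq_of_not_parent {φ : (Fin n → ℝ) → ℝ}
    (hφ : ∀ z z' : Fin n → ℝ, (∀ k, E k i → z k = z' k) → φ z = φ z') (hj : ¬ E j i)
    (w : Fin n → ℝ) (t : ℝ) : φ (Function.update w j t) = φ w :=
  hφ _ _ fun k hk => Function.update_of_ne (fun h : k = j => hj (h ▸ hk)) t w

theorem pd_sum_eq_of_sink {L : Fin n → (Fin n → ℝ) → ℝ} (hL : ∀ k, Differentiable ℝ (L k))
    (hdep : ∀ k (z z' : Fin n → ℝ), z k = z' k → (∀ j, E j k → z j = z' j) → L k z = L k z')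
    (hsink : ∀ j, ¬ E i j) :
    pd i (fun w => ∑ k, L k w) = pd i (L i) := by
  rw [pd_sum _ hL]
  funext w
  refine Finset.sum_eq_single i (fun k _ hki => pd_eq_zero_of_update_eq (hL k w) fun t => ?_)
    (by simp)
  exact hdep k _ _ (Function.update_of_ne hki t w)
    fun j hj => Function.update_of_ne (fun h : j = i => hsink k (h ▸ hj)) t w

end SinkNode

theorem stmt1_general {n : ℕ} (E : Fin n → Fin n → Prop)
    (p : (Fin n → ℝ) → ℝ)
    (L : Fin n → (Fin n → ℝ) → ℝ)
    (hfac : ∀ z, Real.log (p z) = ∑ k, L k z)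
    (hsmooth : ∀ k, ContDiff ℝ 3 (L k))
    (hdep : ∀ k (z z' : Fin n → ℝ),
      z k = z' k → (∀ j, E j k → z j = z' j) → L k z = L k z')
    (i : Fin n) (hsink : ∀ j, ¬ E i j)
    (f : (Fin n → ℝ) → ℝ)
    (hfdep : ∀ z z' : Fin n → ℝ, (∀ j, E j i → z j = z' j) → f z = f z')
    (σ : (Fin n → ℝ) → ℝ)
    (hσdep : ∀ z z' : Fin n → ℝ, (∀ j, E j i → z j = z' j) → σ z = σ z')
    (hGauss : ∀ z, L i z =
      -(1/2) * ((z i - f z) / σ z)^2 - Real.log (σ z) - (1/2) * Real.log (2 * Real.pi)) :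
    ∀ z : Fin n → ℝ,
      pd i (pd i (fun w => Real.log (p w))) z = -1 / (σ z)^2 ∧
      ∀ j : Fin n, ¬ E j i →
        pd j (pd i (pd i (fun w => Real.log (p w)))) z = 0 := by
  have hσi := update_eq_of_not_parent hσdep (hsink i)
  have hreduce : pd i (pd i (fun w => Real.log (p w))) = pd i (pd i (L i)) := by
    rw [funext hfac,
      pd_sum_eq_of_sink (fun k => (hsmooth k).differentiable (by norm_num)) hdep hsink]
  have hsecond : pd i (pd i (L i)) = fun w => -1 / σ w ^ 2 :=
    pd_pd_eq_of_gaussian ((hsmooth i).of_le (by norm_num))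
      (b := fun w => -Real.log (σ w) - (1/2) * Real.log (2 * Real.pi))
      (fun w => by rw [hGauss]; ring) (update_eq_of_not_parent hfdep (hsink i)) hσi
      (fun w t => by simp only [hσi])
  have hC1 : ContDiff ℝ 1 (pd i (pd i (L i))) :=
    ((hsmooth i).pd (m := 2) (by norm_num) i).pd (by norm_num) i
  intro z
  refine ⟨by rw [hreduce, hsecond], fun j hj => ?_⟩
  rw [hreduce]
  refine pd_eq_zero_of_update_eq (hC1.differentiable one_ne_zero z) fun t => ?_
  simp only [hsecond, update_eq_of_not_parent hσdep hj]

/-- If node `i` is a sink of a DAG with heteroscedastic Gaussian conditional, then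
`∂² log p / ∂z_i² = -1/σ_i(pa)²` and `∂³ log p / ∂z_i² ∂z_j = 0` for `j` not a parent of `i`. -/
theorem stmt1 {n : ℕ} (E : Fin n → Fin n → Prop)
    (hacyc : ∀ a, ¬ Relation.TransGen E a a)
    (p : (Fin n → ℝ) → ℝ) (hp : ∀ z, 0 < p z)
    (L : Fin n → (Fin n → ℝ) → ℝ)
    (hfac : ∀ z, Real.log (p z) = ∑ k, L k z)
    (hsmooth : ∀ k, ContDiff ℝ 3 (L k))
    (hdep : ∀ k (z z' : Fin n → ℝ),
      z k = z' k → (∀ j, E j k → z j = z' j) → L k z = L k z')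
    (i : Fin n) (hsink : ∀ j, ¬ E i j)
    (f : (Fin n → ℝ) → ℝ) (hf : ContDiff ℝ 3 f)
    (hfdep : ∀ z z' : Fin n → ℝ, (∀ j, E j i → z j = z' j) → f z = f z')
    (σ : (Fin n → ℝ) → ℝ) (hσpos : ∀ z, 0 < σ z) (hσC : ContDiff ℝ 3 σ)
    (hσdep : ∀ z z' : Fin n → ℝ, (∀ j, E j i → z j = z' j) → σ z = σ z')
    (hGauss : ∀ z, L i z =
      -(1/2) * ((z i - f z) / σ z)^2 - Real.log (σ z) - (1/2) * Real.log (2 * Real.pi)) :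
    ∀ z : Fin n → ℝ,
      pd i (pd i (fun w => Real.log (p w))) z = -1 / (σ z)^2 ∧
      ∀ j : Fin n, ¬ E j i →
        pd j (pd i (pd i (fun w => Real.log (p w)))) z = 0 :=
  stmt1_general E p L hfac hsmooth hdep i hsink f hfdep σ hσdep hGauss
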